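/- The function C((s₁,z₁),(s₂,z₂)) = (s₁ ∧ s₂)·Σ(z₁ ∧ z₂) is a positive semi-definite kernel on [0,1] × ℝ, provided Σ is nonnegative and nondecreasing. -/

import Mathlib

open MeasureTheory Set

lemma psd_of_inter (n : ℕ) (A : Fin n → Set (ℝ × ℝ)) (hm : ∀ i, MeasurableSet (A i))
    (hfin : ∀ i, volume (A i) < ⊤) (a : Fin n → ℝ) :
    0 ≤ ∑ i, ∑ j, a i * a j * (volume (A i ∩ A j)).toReal := by
  have hint : ∀ i j : Fin n, Integrable (fun x : ℝ × ℝ =>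
      a i * a j * (A i ∩ A j).indicator (1 : ℝ × ℝ → ℝ) x) volume := by
    intro i j
    refine Integrable.const_mul ?_ _
    rw [integrable_indicator_iff ((hm i).inter (hm j))]
    exact integrableOn_const (lt_of_le_of_lt (measure_mono inter_subset_left) (hfin i)).ne
  have key : ∑ i, ∑ j, a i * a j * (volume (A i ∩ A j)).toReal
      = ∫ x, (∑ i, a i * (A i).indicator (1 : ℝ × ℝ → ℝ) x) ^ 2 := by
    have : ∀ x : ℝ × ℝ, (∑ i, a i * (A i).indicator (1 : ℝ × ℝ → ℝ) x) ^ 2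
        = ∑ i, ∑ j, a i * a j * (A i ∩ A j).indicator (1 : ℝ × ℝ → ℝ) x := by
      intro x
      rw [sq, Finset.sum_mul_sum]
      refine Finset.sum_congr rfl fun i _ => Finset.sum_congr rfl fun j _ => ?_
      rw [Set.inter_indicator_one]
      simp [Pi.mul_apply]; ring
    simp_rw [this]
    rw [integral_finset_sum _ (fun i _ => integrable_finset_sum _ (fun j _ => hint i j))]
    refine Finset.sum_congr rfl fun i _ => ?_
    rw [integral_finset_sum _ (fun j _ => hint i j)]
    refine Finset.sum_congr rfl fun j _ => ?_
    rw [integral_const_mul, integral_indicator_one ((hm i).inter (hm j)), measureReal_def]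
  rw [key]
  exact integral_nonneg fun x => sq_nonneg _

/-- `C((s₁,z₁),(s₂,z₂)) = (s₁∧s₂)·Σ(z₁∧z₂)` is a positive semi-definite
kernel on `[0,1] × ℝ` when `Σ` is nonnegative and nondecreasing. -/
theorem stmt3 (Sg : ℝ → ℝ) (hSgnonneg : ∀ z, 0 ≤ Sg z) (hSgmono : Monotone Sg) :
    ∀ (n : ℕ) (t : Fin n → ℝ × ℝ), (∀ i, (t i).1 ∈ Set.Icc (0:ℝ) 1) →
      ∀ a : Fin n → ℝ,
        0 ≤ ∑ i, ∑ j, a i * a j * (min (t i).1 (t j).1 * Sg (min (t i).2 (t j).2)) := by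
  intro n t ht a
  set A : Fin n → Set (ℝ × ℝ) := fun i => Ioc (0:ℝ) (t i).1 ×ˢ Ioc (0:ℝ) (Sg (t i).2) with hA
  have hm : ∀ i, MeasurableSet (A i) := fun i => measurableSet_Ioc.prod measurableSet_Ioc
  have hfin : ∀ i, volume (A i) < ⊤ := by
    intro i
    rw [hA]
    simp only [Measure.volume_eq_prod, Measure.prod_prod, Real.volume_Ioc]
    exact ENNReal.mul_lt_top ENNReal.ofReal_lt_top ENNReal.ofReal_lt_top
  have hvol : ∀ i j, (volume (A i ∩ A j)).toReal
      = min (t i).1 (t j).1 * Sg (min (t i).2 (t j).2) := by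
    intro i j
    rw [hA]
    simp only [Set.prod_inter_prod, Set.Ioc_inter_Ioc, max_self,
      Measure.volume_eq_prod, Measure.prod_prod, Real.volume_Ioc, sub_zero]
    rw [ENNReal.toReal_mul, ENNReal.toReal_ofReal (le_min (ht i).1 (ht j).1),
      ENNReal.toReal_ofReal (le_min (hSgnonneg _) (hSgnonneg _)), hSgmono.map_min]
  calc (0:ℝ) ≤ ∑ i, ∑ j, a i * a j * (volume (A i ∩ A j)).toReal :=
        psd_of_inter n A hm hfin a
    _ = _ := by
        refine Finset.sum_congr rfl fun i _ => Finset.sum_congr rfl fun j _ => ?_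
        rw [hvol]
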